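/- arXiv:math/0603448 — 3 statements merged into one kernel-verified Lean document; each statement's English description precedes it below -/
import Mathlib

section
/- Let D ≥ 1 be an integer and 0 < L ≤ D. For δ ∈ {0,1}^D let f_δ(x) = 1_{[0,1]^d}(x)(1 + Σ_{j=1}^D δ_j h_j(x₁)). Then for all δ¹, δ² ∈ {0,1}^D, the squared Hellinger distance satisfies H²(f_{δ¹}, f_{δ²}) = 2 ρ(δ¹, δ²) ∫_0^{1/D} (1 − √(1 + h(x))) dx, where ρ is the Hamming distance on {0,1}^D. -/
open MeasureTheory Real
open scoped BigOperators

noncomputable section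

/-- `g(y) = 1_{[0,1/2]}(y) − 1_{(1/2,1]}(y)`. -/
def gstep (y : ℝ) : ℝ :=
  Set.indicator (Set.Icc (0 : ℝ) (1 / 2)) (fun _ => 1) y
    - Set.indicator (Set.Ioc (1 / 2 : ℝ) 1) (fun _ => 1) y

/-- `h(y) = (L/D) g(Dy)`. -/
def hstep (L : ℝ) (D : ℕ) (y : ℝ) : ℝ := (L / D) * gstep (D * y)

/-- The perturbed density `f_δ(x) = 1_{[0,1]^d}(x) (1 + ∑_{j=1}^D δ_j h_j(x₁))`,
where `h_j(y) = h(y − (j−1)/D)` (here `j : Fin D` represents `j+1 ∈ {1,…,D}`). -/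
def fdel (L : ℝ) (D d : ℕ) (hd : 0 < d) (δ : Fin D → Bool) (x : Fin d → ℝ) : ℝ :=
  Set.indicator (Set.Icc (0 : Fin d → ℝ) 1)
    (fun x => 1 + ∑ j : Fin D,
      (if δ j then (1 : ℝ) else 0) * hstep L D (x ⟨0, hd⟩ - (j : ℕ) / D)) x

/-- Squared Hellinger distance between nonnegative functions on `ℝ^d`. -/
def hellingerSq {d : ℕ} (f g : (Fin d → ℝ) → ℝ) : ℝ :=
  ∫ x, (Real.sqrt (f x) - Real.sqrt (g x)) ^ 2

lemma gstep_cases (y : ℝ) : gstep y = 1 ∨ gstep y = 0 ∨ gstep y = -1 := by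
  unfold gstep Set.indicator
  by_cases h1 : y ∈ Set.Icc (0:ℝ) (1/2) <;> by_cases h2 : y ∈ Set.Ioc (1/2:ℝ) 1 <;>
    simp only [h1, h2, if_true, if_false, if_neg, if_pos]
  · exact absurd h2.1 (not_lt.mpr h1.2)
  all_goals norm_num

lemma measurable_gstep : Measurable gstep := by
  unfold gstep
  exact ((measurable_const.indicator measurableSet_Icc).sub
    (measurable_const.indicator measurableSet_Ioc))

lemma measurable_hstep (L : ℝ) (D : ℕ) : Measurable (hstep L D) :=
  measurable_const.mul (measurable_gstep.comp (measurable_const.mul measurable_id))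

lemma gstep_eq_zero {y : ℝ} (h : y < 0 ∨ 1 < y) : gstep y = 0 := by
  unfold gstep
  rcases h with h | h
  · rw [Set.indicator_of_notMem, Set.indicator_of_notMem] <;> simp [Set.mem_Icc, Set.mem_Ioc] <;>
      intro h' <;> linarith
  · rw [Set.indicator_of_notMem, Set.indicator_of_notMem] <;> simp [Set.mem_Icc, Set.mem_Ioc] <;>
      intro h' <;> linarith

lemma hstep_eq_zero {L : ℝ} {D : ℕ} (hD : 1 ≤ D) {y : ℝ} (h : y ∉ Set.Icc (0:ℝ) (1/D)) :
    hstep L D y = 0 := by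
  have hD0 : (0:ℝ) < D := by exact_mod_cast hD
  unfold hstep
  rw [gstep_eq_zero, mul_zero]
  simp only [Set.mem_Icc, not_and_or, not_le] at h
  rcases h with h | h
  · left; nlinarith
  · right; rw [div_lt_iff₀ hD0] at h; nlinarith

lemma one_add_hstep_nonneg {L : ℝ} {D : ℕ} (hL : 0 ≤ L) (hLD : L ≤ D) (y : ℝ) :
    0 ≤ 1 + hstep L D y := by
  have hD0 : (0:ℝ) ≤ D := le_trans hL hLD
  have h1 : L / D ≤ 1 := by
    rcases eq_or_lt_of_le hD0 with h | h
    · simp [← h]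
    · rw [div_le_one h]; exact hLD
  have h0 : 0 ≤ L / D := div_nonneg hL hD0
  unfold hstep
  rcases gstep_cases ((D:ℝ) * y) with h | h | h <;> rw [h] <;> nlinarith

lemma hstep_le {L : ℝ} {D : ℕ} (hL : 0 ≤ L) (hLD : L ≤ D) (y : ℝ) : hstep L D y ≤ 1 := by
  have hD0 : (0:ℝ) ≤ D := le_trans hL hLD
  have h1 : L / D ≤ 1 := by
    rcases eq_or_lt_of_le hD0 with h | h
    · simp [← h]
    · rw [div_le_one h]; exact hLD
  have h0 : 0 ≤ L / D := div_nonneg hL hD0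
  unfold hstep
  rcases gstep_cases ((D:ℝ) * y) with h | h | h <;> rw [h] <;> nlinarith

/-- the grid of bad points -/
def badSet (D : ℕ) : Set ℝ := (fun m : ℕ => (m:ℝ)/D) '' (Set.Iic D)

lemma badSet_finite (D : ℕ) : (badSet D).Finite :=
  (Set.finite_Iic D).image _

lemma hstep_unique {L : ℝ} {D : ℕ} (hD : 1 ≤ D) {y : ℝ} (hy : y ∉ badSet D)
    {j k : Fin D} (hjk : j ≠ k) (hj : hstep L D (y - (j:ℕ)/D) ≠ 0) :
    hstep L D (y - (k:ℕ)/D) = 0 := by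
  have hD0 : (0:ℝ) < D := by exact_mod_cast hD
  have hmem : y - (j:ℕ)/D ∈ Set.Icc (0:ℝ) (1/D) := by
    by_contra hcon; exact hj (hstep_eq_zero hD hcon)
  rw [Set.mem_Icc] at hmem
  have hne : ∀ m : ℕ, m ≤ D → y ≠ (m:ℝ)/D := by
    intro m hm hEq
    exact hy ⟨m, hm, hEq.symm⟩
  have h1 : ((j:ℕ):ℝ)/D < y := by
    rcases lt_or_eq_of_le hmem.1 with h | h
    · linarith
    · exact absurd (by linarith : y = ((j:ℕ):ℝ)/D) (hne j (le_of_lt j.2))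
  have hsplit : (((j:ℕ):ℝ)+1)/D = ((j:ℕ):ℝ)/D + 1/D := by ring
  have h2 : y < (((j:ℕ):ℝ)+1)/D := by
    rcases lt_or_eq_of_le hmem.2 with h | h
    · rw [hsplit]; linarith
    · exfalso
      apply hne ((j:ℕ)+1) j.2
      push_cast
      rw [hsplit]; linarith
  apply hstep_eq_zero hD
  rw [Set.mem_Icc, not_and_or]
  rcases lt_or_gt_of_ne (fun h : (j:ℕ) = (k:ℕ) => hjk (Fin.ext h)) with h | h
  · left; push_neg
    have hjj : ((j:ℕ):ℝ) + 1 ≤ ((k:ℕ):ℝ) := by exact_mod_cast h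
    have hk : (((j:ℕ):ℝ)+1)/D ≤ ((k:ℕ):ℝ)/D := by gcongr
    linarith
  · right; push_neg
    have hjj : ((k:ℕ):ℝ) + 1 ≤ ((j:ℕ):ℝ) := by exact_mod_cast h
    have hk : (((k:ℕ):ℝ)+1)/D ≤ ((j:ℕ):ℝ)/D := by gcongr
    have : ((k:ℕ):ℝ)/D + 1/D ≤ ((j:ℕ):ℝ)/D := by linarith [(by ring : (((k:ℕ):ℝ)+1)/D = ((k:ℕ):ℝ)/D + 1/D)]
    linarith

lemma key_pointwise {L : ℝ} {D : ℕ} (hD : 1 ≤ D)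
    (δ1 δ2 : Fin D → Bool) {y : ℝ} (hy : y ∉ badSet D) :
    (Real.sqrt (1 + ∑ j : Fin D, (if δ1 j then (1:ℝ) else 0) * hstep L D (y - (j:ℕ)/D))
      - Real.sqrt (1 + ∑ j : Fin D, (if δ2 j then (1:ℝ) else 0) * hstep L D (y - (j:ℕ)/D)))^2
    = ∑ j : Fin D, (if δ1 j = δ2 j then (0:ℝ) else 1)
        * (1 - Real.sqrt (1 + hstep L D (y - (j:ℕ)/D)))^2 := by
  by_cases hex : ∃ j0 : Fin D, hstep L D (y - (j0:ℕ)/D) ≠ 0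
  · obtain ⟨j0, hj0⟩ := hex
    have hz : ∀ k : Fin D, k ≠ j0 → hstep L D (y - (k:ℕ)/D) = 0 :=
      fun k hk => hstep_unique hD hy (Ne.symm hk) hj0
    rw [Finset.sum_eq_single j0 (fun b _ hb => by rw [hz b hb]; ring) (by simp),
        Finset.sum_eq_single j0 (fun b _ hb => by rw [hz b hb]; ring) (by simp),
        Finset.sum_eq_single j0 (fun b _ hb => by rw [hz b hb]; simp [Real.sqrt_one]) (by simp)]
    cases hδ1 : δ1 j0 <;> cases hδ2 : δ2 j0 <;>
      simp [Real.sqrt_one] <;> ring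
  · push_neg at hex
    rw [Finset.sum_eq_zero (fun b _ => by rw [hex b]; ring),
        Finset.sum_eq_zero (fun b _ => by rw [hex b]; ring),
        Finset.sum_eq_zero (fun b _ => by rw [hex b]; simp [Real.sqrt_one])]
    simp [Real.sqrt_one]

lemma measurable_psi (L : ℝ) (D : ℕ) :
    Measurable (fun t => (1 - Real.sqrt (1 + hstep L D t))^2) :=
  (measurable_const.sub
    ((Real.continuous_sqrt.measurable).comp (measurable_const.add (measurable_hstep L D)))).pow_const 2

lemma abs_hstep_le (L : ℝ) (D : ℕ) (y : ℝ) : |hstep L D y| ≤ |L / D| := by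
  unfold hstep
  rw [abs_mul]
  rcases gstep_cases ((D:ℝ) * y) with h | h | h <;> rw [h] <;> simp

lemma intOn_bdd {f : ℝ → ℝ} (hf : Measurable f) {C : ℝ} (hC : ∀ t, |f t| ≤ C)
    {s : Set ℝ} (hs : volume s ≠ ⊤) : IntegrableOn f s :=
  Measure.integrableOn_of_bounded hs hf.aestronglyMeasurable
    (ae_of_all _ (fun t => by rw [Real.norm_eq_abs]; exact hC t))

lemma psi_zero {L : ℝ} {D : ℕ} (hD : 1 ≤ D) {t : ℝ} (ht : t ∉ Set.Icc (0:ℝ) (1/D)) :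
    (1 - Real.sqrt (1 + hstep L D t))^2 = 0 := by
  rw [hstep_eq_zero hD ht]
  simp [Real.sqrt_one]

lemma abs_one_sub_sqrt_le {L : ℝ} {D : ℕ} (hL : 0 ≤ L) (hLD : L ≤ (D:ℝ)) (t : ℝ) :
    |1 - Real.sqrt (1 + hstep L D t)| ≤ 1 := by
  have h0 : (0:ℝ) ≤ 1 + hstep L D t := one_add_hstep_nonneg hL hLD t
  have h1 : Real.sqrt (1 + hstep L D t) ≤ 2 := by
    rw [show (2:ℝ) = Real.sqrt 4 by rw [show (4:ℝ) = 2^2 by norm_num, Real.sqrt_sq]; norm_num]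
    exact Real.sqrt_le_sqrt (by linarith [hstep_le hL hLD t])
  have h2 : (0:ℝ) ≤ Real.sqrt (1 + hstep L D t) := Real.sqrt_nonneg _
  rw [abs_le]; constructor <;> linarith

lemma psi_le_one {L : ℝ} {D : ℕ} (hL : 0 ≤ L) (hLD : L ≤ (D:ℝ)) (t : ℝ) :
    |(1 - Real.sqrt (1 + hstep L D t))^2| ≤ 1 := by
  rw [abs_pow]
  calc |1 - Real.sqrt (1 + hstep L D t)|^2 ≤ 1^2 := by
        apply pow_le_pow_left₀ (abs_nonneg _) (abs_one_sub_sqrt_le hL hLD t)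
    _ = 1 := one_pow 2

lemma integral_hstep_zero {D : ℕ} (hD : 1 ≤ D) (L : ℝ) :
    ∫ y in Set.Ioc (0:ℝ) (1/D), hstep L D y = 0 := by
  have hD0 : (0:ℝ) < D := by exact_mod_cast hD
  have h1 : (0:ℝ) ≤ 1/(2*D) := by positivity
  have h2 : (1:ℝ)/(2*D) ≤ 1/D := by
    apply div_le_div_of_nonneg_left one_pos.le hD0; linarith
  have e1 : ∫ y in Set.Ioc (0:ℝ) (1/(2*D)), hstep L D y = (1/(2*D)) * (L/D) := by
    rw [setIntegral_congr_fun measurableSet_Ioc (g := fun _ => L/D) ?_]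
    · rw [setIntegral_const, measureReal_def, Real.volume_Ioc, ENNReal.toReal_ofReal (by linarith)]
      simp only [smul_eq_mul, sub_zero]
    · intro y hy
      rw [Set.mem_Ioc] at hy
      have hy1 : (0:ℝ) ≤ (D:ℝ) * y := by nlinarith [hy.1]
      have hy2 : (D:ℝ) * y ≤ 1/2 := by
        have h3 := mul_le_mul_of_nonneg_left hy.2 hD0.le
        rw [mul_one_div] at h3
        calc (D:ℝ) * y ≤ (D:ℝ)/(2*D) := h3
          _ = 1/2 := by field_simp
      show hstep L D y = L/D
      unfold hstep gstep
      rw [Set.indicator_of_mem (Set.mem_Icc.mpr ⟨hy1, hy2⟩),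
        Set.indicator_of_notMem (by simp only [Set.mem_Ioc, not_and_or, not_lt, not_le]; left; linarith)]
      ring
  have e2 : ∫ y in Set.Ioc ((1:ℝ)/(2*D)) (1/D), hstep L D y = -((1/D - 1/(2*D)) * (L/D)) := by
    rw [setIntegral_congr_fun measurableSet_Ioc (g := fun _ => -(L/D)) ?_]
    · rw [setIntegral_const, measureReal_def, Real.volume_Ioc, ENNReal.toReal_ofReal (by linarith)]
      simp only [smul_eq_mul]
      ring
    · intro y hy
      rw [Set.mem_Ioc] at hy
      have hy1 : (1:ℝ)/2 < (D:ℝ) * y := by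
        have h3 := mul_lt_mul_of_pos_left hy.1 hD0
        rw [mul_one_div] at h3
        calc (1:ℝ)/2 = (D:ℝ)/(2*D) := by field_simp
          _ < (D:ℝ) * y := h3
      have hy2 : (D:ℝ) * y ≤ 1 := by
        have h3 := mul_le_mul_of_nonneg_left hy.2 hD0.le
        rw [mul_one_div] at h3
        calc (D:ℝ) * y ≤ (D:ℝ)/(D:ℝ) := h3
          _ = 1 := div_self hD0.ne'
      show hstep L D y = -(L/D)
      unfold hstep gstep
      rw [Set.indicator_of_notMem (by simp only [Set.mem_Icc, not_and_or, not_le]; right; linarith),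
        Set.indicator_of_mem (Set.mem_Ioc.mpr ⟨hy1, hy2⟩)]
      ring
  rw [← Set.Ioc_union_Ioc_eq_Ioc h1 h2,
    setIntegral_union (Set.Ioc_disjoint_Ioc_of_le le_rfl) measurableSet_Ioc
      (intOn_bdd (measurable_hstep L D) (abs_hstep_le L D) measure_Ioc_lt_top.ne)
      (intOn_bdd (measurable_hstep L D) (abs_hstep_le L D) (by simp)),
    e1, e2]
  field_simp
  ring

lemma measurable_one_sub_sqrt (L : ℝ) (D : ℕ) :
    Measurable (fun t => 1 - Real.sqrt (1 + hstep L D t)) :=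
  measurable_const.sub
    ((Real.continuous_sqrt.measurable).comp (measurable_const.add (measurable_hstep L D)))

lemma integral_psi {D : ℕ} (hD : 1 ≤ D) {L : ℝ} (hL : 0 ≤ L) (hLD : L ≤ (D:ℝ)) :
    ∫ y in Set.Icc (0:ℝ) (1/D), (1 - Real.sqrt (1 + hstep L D y))^2
      = 2 * ∫ x in (0:ℝ)..(1/D), (1 - Real.sqrt (1 + hstep L D x)) := by
  have hD0 : (0:ℝ) < D := by exact_mod_cast hD
  have key : ∀ y, (1 - Real.sqrt (1 + hstep L D y))^2
      = 2*(1 - Real.sqrt (1 + hstep L D y)) + hstep L D y := by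
    intro y
    have h2 : Real.sqrt (1 + hstep L D y) ^ 2 = 1 + hstep L D y :=
      Real.sq_sqrt (one_add_hstep_nonneg hL hLD y)
    linear_combination h2
  rw [integral_Icc_eq_integral_Ioc,
    intervalIntegral.integral_of_le (by positivity : (0:ℝ) ≤ 1/D)]
  simp_rw [key]
  rw [integral_add
    (((intOn_bdd (measurable_one_sub_sqrt L D) (abs_one_sub_sqrt_le hL hLD) (by simp))).const_mul 2)
    (intOn_bdd (measurable_hstep L D) (abs_hstep_le L D) (by simp)),
    integral_hstep_zero hD L, add_zero, MeasureTheory.integral_const_mul]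

lemma sum_ite_eq_hamming {D : ℕ} (δ1 δ2 : Fin D → Bool) :
    ∑ j : Fin D, (if δ1 j = δ2 j then (0:ℝ) else 1) = (hammingDist δ1 δ2 : ℝ) := by
  rw [hammingDist, Finset.card_filter]
  push_cast
  apply Finset.sum_congr rfl
  intro j _
  by_cases h : δ1 j = δ2 j <;> simp [h]

/-- The squared Hellinger distance between two perturbed densities equals
`2 ρ(δ1,δ2) ∫_0^{1/D} (1 − √(1 + h(x))) dx`, where `ρ` is the Hamming distance. -/
theorem hellingerSq_fdel
    (d D : ℕ) (hd : 0 < d) (hD : 1 ≤ D) (L : ℝ) (hL : 0 < L) (hLD : L ≤ D)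
    (δ1 δ2 : Fin D → Bool) :
    hellingerSq (fdel L D d hd δ1) (fdel L D d hd δ2)
      = 2 * (hammingDist δ1 δ2 : ℝ)
          * ∫ x in (0 : ℝ)..(1 / D), (1 - Real.sqrt (1 + hstep L D x)) := by
  have hD0 : (0:ℝ) < D := by exact_mod_cast hD
  have hnull : volume {x : Fin d → ℝ | x ⟨0, hd⟩ ∈ badSet D} = 0 := by
    have heq : {x : Fin d → ℝ | x ⟨0, hd⟩ ∈ badSet D}
        = Function.eval (⟨0, hd⟩ : Fin d) ⁻¹' badSet D := rfl
    rw [heq, volume_pi]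
    exact Measure.pi_eval_preimage_null _ ((badSet_finite D).measure_zero _)
  -- Step 1 : a.e. rewrite of the integrand
  have step1 : hellingerSq (fdel L D d hd δ1) (fdel L D d hd δ2)
      = ∫ x : Fin d → ℝ, Set.indicator (Set.Icc (0 : Fin d → ℝ) 1)
          (fun x => ∑ j : Fin D, (if δ1 j = δ2 j then (0:ℝ) else 1)
            * (1 - Real.sqrt (1 + hstep L D (x ⟨0, hd⟩ - (j:ℕ)/D)))^2) x := by
    unfold hellingerSq
    apply integral_congr_ae
    filter_upwards [measure_eq_zero_iff_ae_notMem.mp hnull] with x hx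
    by_cases hx1 : x ∈ Set.Icc (0 : Fin d → ℝ) 1
    · rw [Set.indicator_of_mem hx1]
      unfold fdel
      rw [Set.indicator_of_mem hx1, Set.indicator_of_mem hx1]
      exact key_pointwise hD δ1 δ2 hx
    · unfold fdel
      rw [Set.indicator_of_notMem hx1, Set.indicator_of_notMem hx1,
        Set.indicator_of_notMem hx1]
      simp
  have hmem : ∀ x : Fin d → ℝ, x ∈ Set.Icc (0 : Fin d → ℝ) 1 ↔
      ∀ i, x i ∈ Set.Icc (0:ℝ) 1 := by
    intro x
    simp [Set.mem_Icc, Pi.le_def, forall_and]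
  -- the factor functions
  -- Step 2 : write the integrand as a product
  have step2 : ∀ x : Fin d → ℝ, Set.indicator (Set.Icc (0 : Fin d → ℝ) 1)
      (fun x => ∑ j : Fin D, (if δ1 j = δ2 j then (0:ℝ) else 1)
        * (1 - Real.sqrt (1 + hstep L D (x ⟨0, hd⟩ - (j:ℕ)/D)))^2) x
      = ∏ i : Fin d, (if i = (⟨0, hd⟩ : Fin d) then
          Set.indicator (Set.Icc (0:ℝ) 1) (fun y => ∑ j : Fin D,
            (if δ1 j = δ2 j then (0:ℝ) else 1)
              * (1 - Real.sqrt (1 + hstep L D (y - (j:ℕ)/D)))^2)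
          else Set.indicator (Set.Icc (0:ℝ) 1) (fun _ => 1)) (x i) := by
    intro x
    by_cases hx : x ∈ Set.Icc (0 : Fin d → ℝ) 1
    · rw [Set.indicator_of_mem hx,
        Finset.prod_eq_single (⟨0, hd⟩ : Fin d) ?_ (by simp)]
      · rw [if_pos rfl, Set.indicator_of_mem ((hmem x).mp hx _)]
      · intro b _ hb
        rw [if_neg hb, Set.indicator_of_mem ((hmem x).mp hx b)]
    · rw [Set.indicator_of_notMem hx]
      rw [hmem x] at hx
      push_neg at hx
      obtain ⟨i, hi⟩ := hx
      symm
      apply Finset.prod_eq_zero (Finset.mem_univ i)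
      by_cases hii : i = (⟨0, hd⟩ : Fin d)
      · rw [if_pos hii]
        subst hii
        rw [Set.indicator_of_notMem hi]
      · rw [if_neg hii, Set.indicator_of_notMem hi]
  -- Step 3 : Fubini for the product
  have step3 : ∫ x : Fin d → ℝ, ∏ i : Fin d, (if i = (⟨0, hd⟩ : Fin d) then
          Set.indicator (Set.Icc (0:ℝ) 1) (fun y => ∑ j : Fin D,
            (if δ1 j = δ2 j then (0:ℝ) else 1)
              * (1 - Real.sqrt (1 + hstep L D (y - (j:ℕ)/D)))^2)
          else Set.indicator (Set.Icc (0:ℝ) 1) (fun _ => 1)) (x i)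
      = ∫ t, Set.indicator (Set.Icc (0:ℝ) 1) (fun y => ∑ j : Fin D,
            (if δ1 j = δ2 j then (0:ℝ) else 1)
              * (1 - Real.sqrt (1 + hstep L D (y - (j:ℕ)/D)))^2) t := by
    rw [MeasureTheory.integral_fintype_prod_volume_eq_prod (ι := Fin d),
      Finset.prod_eq_single (⟨0, hd⟩ : Fin d) ?_ (by simp)]
    · rw [if_pos rfl]
    · intro b _ hb
      rw [if_neg hb, MeasureTheory.integral_indicator_const (1:ℝ) measurableSet_Icc,
        measureReal_def, Real.volume_Icc]
      norm_num
  -- support of the translated ψ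
  have hsupp : ∀ (j : Fin D) (t : ℝ), t ∉ Set.Icc (0:ℝ) 1 →
      (1 - Real.sqrt (1 + hstep L D (t - (j:ℕ)/D)))^2 = 0 := by
    intro j t ht
    apply psi_zero hD
    have hle : ((j:ℕ):ℝ) + 1 ≤ (D:ℝ) := by exact_mod_cast j.2
    have hj1 : ((j:ℕ):ℝ)/D ≤ 1 - 1/D := by
      calc ((j:ℕ):ℝ)/D ≤ ((D:ℝ)-1)/D := by gcongr; linarith
        _ = 1 - 1/D := by field_simp
    have hj0 : (0:ℝ) ≤ ((j:ℕ):ℝ)/D := by positivity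
    simp only [Set.mem_Icc, not_and_or, not_le] at ht ⊢
    rcases ht with h | h
    · left; linarith
    · right; linarith
  -- Step 4 : compute the 1-D integral
  have step4 : ∫ t, Set.indicator (Set.Icc (0:ℝ) 1) (fun y => ∑ j : Fin D,
            (if δ1 j = δ2 j then (0:ℝ) else 1)
              * (1 - Real.sqrt (1 + hstep L D (y - (j:ℕ)/D)))^2) t
      = ∑ j : Fin D, (if δ1 j = δ2 j then (0:ℝ) else 1)
          * ∫ y in Set.Icc (0:ℝ) (1/D), (1 - Real.sqrt (1 + hstep L D y))^2 := by
    rw [MeasureTheory.integral_indicator measurableSet_Icc,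
      MeasureTheory.integral_finset_sum]
    · apply Finset.sum_congr rfl
      intro j _
      rw [MeasureTheory.integral_const_mul]
      congr 1
      rw [setIntegral_eq_integral_of_forall_compl_eq_zero (fun t ht => hsupp j t ht),
        integral_sub_right_eq_self (fun t => (1 - Real.sqrt (1 + hstep L D t))^2) ((j:ℕ)/(D:ℝ)),
        ← setIntegral_eq_integral_of_forall_compl_eq_zero (fun t ht => psi_zero hD ht)]
    · intro j _
      apply Integrable.const_mul
      exact intOn_bdd ((measurable_psi L D).comp (measurable_sub_const _))
        (fun t => psi_le_one hL.le hLD _) (by simp)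
  rw [step1]
  rw [show (fun x : Fin d → ℝ => Set.indicator (Set.Icc (0 : Fin d → ℝ) 1)
      (fun x => ∑ j : Fin D, (if δ1 j = δ2 j then (0:ℝ) else 1)
        * (1 - Real.sqrt (1 + hstep L D (x ⟨0, hd⟩ - (j:ℕ)/D)))^2) x) = _ from funext step2]
  rw [step3, step4, integral_psi hD hL.le hLD, ← Finset.sum_mul, sum_ite_eq_hamming δ1 δ2]
  ring

end
end

section
/- Let D ≥ 1 be an integer and 0 < L ≤ D, and let h(y) = (L/D)(1_{[0,1/2]}(D y) − 1_{(1/2,1]}(D y)). Then ∫_0^{1/D} (1 − √(1 + h(x))) dx ≥ α ∫_0^{1/D} h²(x) dx = α L² / D³, where α = 8^{−3/2}. -/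
open MeasureTheory Real

noncomputable section

lemma gstep_left {y : ℝ} (h0 : 0 ≤ y) (h1 : y ≤ 1/2) : gstep y = 1 := by
  unfold gstep
  rw [Set.indicator_of_mem (Set.mem_Icc.mpr ⟨h0, h1⟩), Set.indicator_of_notMem]
  · ring
  · rintro ⟨h2, _⟩; linarith

lemma gstep_right {y : ℝ} (h0 : 1/2 < y) (h1 : y ≤ 1) : gstep y = -1 := by
  unfold gstep
  rw [Set.indicator_of_notMem, Set.indicator_of_mem (Set.mem_Ioc.mpr ⟨h0, h1⟩)]
  · ring
  · rintro ⟨_, h2⟩; linarith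

lemma sqrt_sum_le {t : ℝ} (h0 : 0 ≤ t) (h1 : t ≤ 1) :
    Real.sqrt (1+t) + Real.sqrt (1-t) ≤ 2 - t^2/4 := by
  have hu := Real.sq_sqrt (by linarith : (0:ℝ) ≤ 1+t)
  have hv := Real.sq_sqrt (by linarith : (0:ℝ) ≤ 1-t)
  have hu0 := Real.sqrt_nonneg (1+t)
  have hv0 := Real.sqrt_nonneg (1-t)
  have hprod : Real.sqrt (1+t) * Real.sqrt (1-t) = Real.sqrt ((1+t)*(1-t)) :=
    (Real.sqrt_mul (by linarith) _).symm
  have hple : Real.sqrt ((1+t)*(1-t)) ≤ 1 - t^2/2 := by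
    rw [show (1 - t^2/2) = Real.sqrt ((1-t^2/2)^2) from (Real.sqrt_sq (by nlinarith)).symm]
    exact Real.sqrt_le_sqrt (by nlinarith)
  have h2 : (Real.sqrt (1+t) + Real.sqrt (1-t))^2 ≤ 4 - t^2 := by nlinarith
  nlinarith [sq_nonneg (t^2), h2, hu0, hv0]

lemma alpha_le : (8:ℝ) ^ (-(3:ℝ)/2) ≤ 1/8 := by
  have h : (8:ℝ) ^ (-(3:ℝ)/2) ≤ (8:ℝ) ^ (-1:ℝ) :=
    Real.rpow_le_rpow_of_exponent_le (by norm_num) (by norm_num)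
  rw [Real.rpow_neg_one] at h
  linarith [h]

/-- `∫_0^{1/D} (1 − √(1+h(x))) dx ≥ α ∫_0^{1/D} h²(x) dx = α L²/D³` with `α = 8^{−3/2}`. -/
theorem integral_one_sub_sqrt_lower_bound
    (D : ℕ) (hD : 1 ≤ D) (L : ℝ) (hL : 0 < L) (hLD : L ≤ D) :
    (8 : ℝ) ^ (-(3 : ℝ) / 2) * ∫ x in (0 : ℝ)..(1 / D), hstep L D x ^ 2
        = (8 : ℝ) ^ (-(3 : ℝ) / 2) * L ^ 2 / D ^ 3 ∧
    (8 : ℝ) ^ (-(3 : ℝ) / 2) * ∫ x in (0 : ℝ)..(1 / D), hstep L D x ^ 2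
        ≤ ∫ x in (0 : ℝ)..(1 / D), (1 - Real.sqrt (1 + hstep L D x)) := by
  have hDr : (0:ℝ) < (D:ℝ) := by exact_mod_cast Nat.lt_of_lt_of_le Nat.zero_lt_one hD
  set Dr : ℝ := (D : ℝ) with hDrdef
  set t : ℝ := L / Dr with ht
  have ht0 : 0 < t := div_pos hL hDr
  have ht1 : t ≤ 1 := (div_le_one hDr).mpr hLD
  set a : ℝ := 1/(2*Dr) with hadef
  set b : ℝ := 1/Dr with hbdef
  have ha0 : 0 ≤ a := by positivity
  have hb0 : 0 ≤ b := by positivity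
  have hab : a ≤ b := by
    rw [hadef, hbdef]
    rw [div_le_div_iff₀ (by linarith) hDr]; linarith
  have hba : b - a = a := by rw [hadef, hbdef]; field_simp; ring
  have hb2a : b = 2 * a := by linarith
  set α : ℝ := (8:ℝ) ^ (-(3:ℝ)/2) with hα
  have hα0 : 0 ≤ α := Real.rpow_nonneg (by norm_num) _
  have hα8 : α ≤ 1/8 := alpha_le
  -- values of hstep
  have hval1 : ∀ x ∈ Set.Icc (0:ℝ) a, hstep L D x = t := by
    intro x hx
    have hy0 : 0 ≤ Dr * x := mul_nonneg hDr.le hx.1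
    have hy1 : Dr * x ≤ 1/2 := by
      have := hx.2
      rw [hadef, le_div_iff₀ (by linarith)] at this
      linarith
    unfold hstep
    rw [← hDrdef, gstep_left hy0 hy1, mul_one, ht]
  have hval2 : ∀ x ∈ Set.Ioc a b, hstep L D x = -t := by
    intro x hx
    have hy0 : 1/2 < Dr * x := by
      have := hx.1
      rw [hadef, div_lt_iff₀ (by linarith)] at this
      linarith
    have hy1 : Dr * x ≤ 1 := by
      have := hx.2
      rw [hbdef, le_div_iff₀ hDr] at this
      linarith
    unfold hstep
    rw [← hDrdef, gstep_right hy0 hy1, ht]; ring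
  -- integral of h^2
  have hsq : ∫ x in (0:ℝ)..b, hstep L D x ^ 2 = b * t^2 := by
    rw [intervalIntegral.integral_congr (g := fun _ => t^2) ?_,
      intervalIntegral.integral_const, smul_eq_mul, sub_zero]
    intro x hx
    rw [Set.uIcc_of_le hb0] at hx
    rcases le_or_gt x a with h | h
    · simp only [hval1 x ⟨hx.1, h⟩]
    · simp only [hval2 x ⟨h, hx.2⟩]; ring
  -- sqrt integral
  set u : ℝ := Real.sqrt (1 + t) with hu
  set v : ℝ := Real.sqrt (1 - t) with hv
  have hEq1 : Set.EqOn (fun x => 1 - Real.sqrt (1 + hstep L D x)) (fun _ => 1 - u)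
      (Set.uIcc 0 a) := by
    intro x hx
    rw [Set.uIcc_of_le ha0] at hx
    simp only
    rw [hval1 x hx]
  have hEq2 : Set.EqOn (fun x => 1 - Real.sqrt (1 + hstep L D x)) (fun _ => 1 - v)
      (Set.Ioc a b) := by
    intro x hx
    simp only
    rw [hval2 x hx, hv, show (1:ℝ) + -t = 1 - t from by ring]
  have hi1 : IntervalIntegrable (fun x => 1 - Real.sqrt (1 + hstep L D x)) volume 0 a := by
    rw [intervalIntegrable_iff_integrableOn_Ioc_of_le ha0]
    refine (integrableOn_congr_fun (fun x hx => hEq1 ?_) measurableSet_Ioc).mpr ?_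
    · rw [Set.uIcc_of_le ha0]; exact Set.Ioc_subset_Icc_self hx
    · exact (integrableOn_const_iff).mpr (Or.inr (measure_Ioc_lt_top))
  have hi2 : IntervalIntegrable (fun x => 1 - Real.sqrt (1 + hstep L D x)) volume a b := by
    rw [intervalIntegrable_iff_integrableOn_Ioc_of_le hab]
    refine (integrableOn_congr_fun hEq2 measurableSet_Ioc).mpr ?_
    exact (integrableOn_const_iff).mpr (Or.inr (measure_Ioc_lt_top))
  have hv1 : ∫ x in (0:ℝ)..a, (1 - Real.sqrt (1 + hstep L D x)) = a * (1 - u) := by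
    rw [intervalIntegral.integral_congr hEq1, intervalIntegral.integral_const,
      smul_eq_mul, sub_zero]
  have hv2 : ∫ x in a..b, (1 - Real.sqrt (1 + hstep L D x)) = a * (1 - v) := by
    rw [intervalIntegral.integral_of_le hab,
      setIntegral_congr_fun measurableSet_Ioc hEq2, setIntegral_const,
      Real.volume_real_Ioc_of_le hab, hba, smul_eq_mul]
  have hsplit : ∫ x in (0:ℝ)..b, (1 - Real.sqrt (1 + hstep L D x))
      = a * (1 - u) + a * (1 - v) := by
    rw [← intervalIntegral.integral_add_adjacent_intervals hi1 hi2, hv1, hv2]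
  have key : 2 * α * t^2 ≤ 2 - u - v := by
    have := sqrt_sum_le ht0.le ht1
    rw [← hu, ← hv] at this
    nlinarith [sq_nonneg t]
  constructor
  · rw [hsq, ht, hbdef]
    rw [hDrdef]
    field_simp
  · rw [hsq, hsplit]
    calc α * (b * t^2) = a * (2 * α * t^2) := by rw [hb2a]; ring
      _ ≤ a * (2 - u - v) := mul_le_mul_of_nonneg_left key ha0
      _ = a * (1 - u) + a * (1 - v) := by ring

end
end

section
/- Let D ≥ 1 be an integer and 0 < L ≤ D, and for δ ∈ {0,1}^D let f_δ(x) = 1_{[0,1]^d}(x)(1 + Σ_{j=1}^D δ_j h_j(x₁)). Then for all δ¹, δ² ∈ {0,1}^D, the L₁-distance satisfies v(f_{δ¹}, f_{δ²}) = (L / D²) ρ(δ¹, δ²), where ρ is the Hamming distance on {0,1}^D. -/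
open MeasureTheory Real
open scoped BigOperators

noncomputable section

/-- `L₁`-distance between two measurable functions on `ℝ^d`. -/
def L1dist {d : ℕ} (f g : (Fin d → ℝ) → ℝ) : ℝ :=
  ∫ x, |f x - g x|

lemma gstep_eq_zero_s12 {z : ℝ} (hz : z ∉ Set.Icc (0:ℝ) 1) : gstep z = 0 := by
  have h1 : z ∉ Set.Icc (0:ℝ) (1/2) := fun h => hz ⟨h.1, h.2.trans (by norm_num)⟩
  have h2 : z ∉ Set.Ioc (1/2:ℝ) 1 := fun h => hz ⟨le_trans (by norm_num) h.1.le, h.2⟩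
  rw [gstep, Set.indicator_of_notMem h1, Set.indicator_of_notMem h2, sub_zero]

lemma gstep_mem {z : ℝ} (hz : gstep z ≠ 0) : z ∈ Set.Icc (0:ℝ) 1 := by
  by_contra h; exact hz (gstep_eq_zero_s12 h)

lemma abs_gstep (z : ℝ) : |gstep z| = Set.indicator (Set.Icc (0:ℝ) 1) (fun _ => 1) z := by
  unfold gstep
  by_cases h1 : z ∈ Set.Icc (0:ℝ) (1/2)
  · have h2 : z ∉ Set.Ioc (1/2:ℝ) 1 := fun h => absurd h1.2 (not_le.mpr h.1)
    have h3 : z ∈ Set.Icc (0:ℝ) 1 := ⟨h1.1, h1.2.trans (by norm_num)⟩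
    rw [Set.indicator_of_mem h1, Set.indicator_of_notMem h2, Set.indicator_of_mem h3]
    norm_num
  · by_cases h2 : z ∈ Set.Ioc (1/2:ℝ) 1
    · have h3 : z ∈ Set.Icc (0:ℝ) 1 := ⟨le_trans (by norm_num) h2.1.le, h2.2⟩
      rw [Set.indicator_of_notMem h1, Set.indicator_of_mem h2, Set.indicator_of_mem h3]
      norm_num
    · have h3 : z ∉ Set.Icc (0:ℝ) 1 := by
        intro h
        rcases le_or_gt z (1/2) with hc | hc
        · exact h1 ⟨h.1, hc⟩
        · exact h2 ⟨hc, h.2⟩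
      rw [Set.indicator_of_notMem h1, Set.indicator_of_notMem h2, Set.indicator_of_notMem h3]
      norm_num

lemma hstep_mem {L : ℝ} {D : ℕ} (hD : 0 < D) {j : ℕ} {y : ℝ}
    (h : hstep L D (y - j/D) ≠ 0) : (j:ℝ) ≤ D*y ∧ (D:ℝ)*y ≤ j+1 := by
  have hD' : (0:ℝ) < D := by exact_mod_cast hD
  have hg : gstep ((D:ℝ)*(y - j/D)) ≠ 0 := by
    intro h0; apply h; simp [hstep, h0]
  have hm := gstep_mem hg
  rw [Set.mem_Icc] at hm
  have hexp : (D:ℝ)*(y - (j:ℝ)/D) = D*y - j := by field_simp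
  rw [hexp] at hm
  constructor <;> linarith [hm.1, hm.2]

lemma hstep_zero_outside {L : ℝ} {D : ℕ} (hD : 0 < D) {j : ℕ} (hj : j < D) {y : ℝ}
    (hy : y ∉ Set.Icc (0:ℝ) 1) : hstep L D (y - j/D) = 0 := by
  by_contra h
  obtain ⟨h1, h2⟩ := hstep_mem hD h
  have hD' : (0:ℝ) < D := by exact_mod_cast hD
  have hjD : (j:ℝ)+1 ≤ D := by exact_mod_cast hj
  apply hy
  rw [Set.mem_Icc]
  constructor
  · nlinarith [Nat.cast_nonneg (α := ℝ) j]
  · nlinarith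

lemma abs_hstep {L : ℝ} {D : ℕ} (hL : 0 < L) (hD : 0 < D) (j : ℕ) (y : ℝ) :
    |hstep L D (y - j/D)| =
      L/D * Set.indicator (Set.Icc ((j:ℝ)/D) (((j:ℝ)+1)/D)) (fun _ => 1) y := by
  have hD' : (0:ℝ) < D := by exact_mod_cast hD
  have hLD : (0:ℝ) < L/D := div_pos hL hD'
  rw [hstep, abs_mul, abs_of_pos hLD, abs_gstep]
  congr 1
  have hexp : (D:ℝ)*(y - (j:ℝ)/D) = D*y - j := by field_simp
  rw [Set.indicator_apply, Set.indicator_apply]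
  have hiff : (D:ℝ)*(y - (j:ℝ)/D) ∈ Set.Icc (0:ℝ) 1 ↔ y ∈ Set.Icc ((j:ℝ)/D) (((j:ℝ)+1)/D) := by
    rw [Set.mem_Icc, Set.mem_Icc, hexp, div_le_iff₀ hD', le_div_iff₀ hD']
    constructor <;> rintro ⟨ha, hb⟩ <;> constructor <;> nlinarith
  rw [if_congr hiff rfl rfl]

/-- The `L₁`-distance between two perturbed densities equals `(L/D²) ρ(δ¹,δ²)`,
where `ρ` is the Hamming distance. -/
theorem L1dist_fdel
    (d D : ℕ) (hd : 0 < d) (hD : 1 ≤ D) (L : ℝ) (hL : 0 < L) (hLD : L ≤ D)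
    (δ1 δ2 : Fin D → Bool) :
    L1dist (fdel L D d hd δ1) (fdel L D d hd δ2)
      = L / D ^ 2 * (hammingDist δ1 δ2 : ℝ) := by
  have hD0 : 0 < D := hD
  have hD' : (0:ℝ) < D := by exact_mod_cast hD0
  set ε : Fin D → ℝ := fun j => (if δ1 j then (1:ℝ) else 0) - (if δ2 j then (1:ℝ) else 0)
    with hε
  set c : Fin D → ℝ := fun j => if δ1 j ≠ δ2 j then (1:ℝ) else 0 with hc
  have habsε : ∀ j, |ε j| = c j := by
    intro j
    simp only [hε, hc]
    cases h1 : δ1 j <;> cases h2 : δ2 j <;> norm_num [h1, h2]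
  set G : ℝ → ℝ := fun y => ∑ j : Fin D, ε j * hstep L D (y - (j:ℕ)/D) with hG
  set A : ℝ → ℝ := fun y => Set.indicator (Set.Icc (0:ℝ) 1) (fun _ => 1) y * |G y| with hA
  set B : ℝ → ℝ := fun y => Set.indicator (Set.Icc (0:ℝ) 1) (fun _ => 1) y with hB
  set F : Fin d → ℝ → ℝ := fun i => if i = (⟨0, hd⟩ : Fin d) then A else B with hF
  -- pointwise identity
  have key : ∀ x : Fin d → ℝ,
      |fdel L D d hd δ1 x - fdel L D d hd δ2 x| = ∏ i : Fin d, F i (x i) := by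
    intro x
    by_cases hx : x ∈ Set.Icc (0 : Fin d → ℝ) 1
    · have hxi : ∀ i, x i ∈ Set.Icc (0:ℝ) 1 := by
        intro i
        rw [Set.mem_Icc] at hx
        exact ⟨by simpa using hx.1 i, by simpa using hx.2 i⟩
      have hdiff : fdel L D d hd δ1 x - fdel L D d hd δ2 x = G (x ⟨0, hd⟩) := by
        rw [fdel, fdel, Set.indicator_of_mem hx, Set.indicator_of_mem hx, hG]
        have hterm : ∀ j : Fin D, ε j * hstep L D (x ⟨0, hd⟩ - (j:ℕ)/D)
            = (if δ1 j then (1:ℝ) else 0) * hstep L D (x ⟨0, hd⟩ - (j:ℕ)/D)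
              - (if δ2 j then (1:ℝ) else 0) * hstep L D (x ⟨0, hd⟩ - (j:ℕ)/D) := by
          intro j; rw [hε]; ring
        simp_rw [hterm, Finset.sum_sub_distrib]
        ring
      rw [hdiff, ← Finset.mul_prod_erase Finset.univ (fun i => F i (x i))
        (Finset.mem_univ (⟨0, hd⟩ : Fin d))]
      have h1 : F (⟨0, hd⟩ : Fin d) (x ⟨0, hd⟩) = |G (x ⟨0, hd⟩)| := by
        simp only [hF, if_true, eq_self_iff_true, ite_true, hA]
        rw [Set.indicator_of_mem (hxi _), one_mul]
      have h2 : ∀ i ∈ Finset.univ.erase (⟨0, hd⟩ : Fin d), F i (x i) = 1 := by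
        intro i hi
        simp only [hF, if_neg (Finset.mem_erase.mp hi).1, hB]
        exact Set.indicator_of_mem (hxi i) _
      rw [h1, Finset.prod_congr rfl h2, Finset.prod_const_one, mul_one]
    · have h01 : fdel L D d hd δ1 x = 0 := by rw [fdel]; exact Set.indicator_of_notMem hx _
      have h02 : fdel L D d hd δ2 x = 0 := by rw [fdel]; exact Set.indicator_of_notMem hx _
      obtain ⟨i, hi⟩ : ∃ i, x i ∉ Set.Icc (0:ℝ) 1 := by
        by_contra hcon
        push_neg at hcon
        apply hx
        rw [Set.mem_Icc]
        constructor
        · intro i; simpa using (hcon i).1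
        · intro i; simpa using (hcon i).2
      rw [h01, h02, sub_zero, abs_zero]
      symm
      apply Finset.prod_eq_zero (Finset.mem_univ i)
      by_cases hii : i = (⟨0, hd⟩ : Fin d)
      · simp only [hF, if_pos hii, hA, Set.indicator_of_notMem hi, zero_mul]
      · simp only [hF, if_neg hii, hB, Set.indicator_of_notMem hi]
  rw [L1dist]
  simp_rw [key]
  rw [MeasureTheory.integral_fintype_prod_volume_eq_prod (ι := Fin d) F]
  rw [← Finset.mul_prod_erase Finset.univ (fun i => ∫ y, F i y)
    (Finset.mem_univ (⟨0, hd⟩ : Fin d))]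
  have hBint : (∫ y, B y) = 1 := by
    rw [hB]
    rw [MeasureTheory.integral_indicator_const (1:ℝ) measurableSet_Icc]
    simp [Real.volume_Icc]
  have h2 : ∀ i ∈ Finset.univ.erase (⟨0, hd⟩ : Fin d), (∫ y, F i y) = 1 := by
    intro i hi
    simp only [hF, if_neg (Finset.mem_erase.mp hi).1]
    exact hBint
  rw [Finset.prod_congr rfl h2, Finset.prod_const_one, mul_one]
  have hFi0 : F (⟨0, hd⟩ : Fin d) = A := by simp only [hF, if_true, eq_self_iff_true, ite_true]
  rw [hFi0]
  have hAeq : ∀ y, A y = |G y| := by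
    intro y
    by_cases hy : y ∈ Set.Icc (0:ℝ) 1
    · simp only [hA]; rw [Set.indicator_of_mem hy, one_mul]
    · have hGy : G y = 0 := by
        rw [hG]
        apply Finset.sum_eq_zero
        intro j _
        rw [hstep_zero_outside hD0 j.isLt hy, mul_zero]
      simp only [hA]
      rw [Set.indicator_of_notMem hy, zero_mul, hGy, abs_zero]
  simp_rw [hAeq]
  -- a.e. rewrite: |G| = ∑ c_j |h_j|
  set T : Fin D → ℝ → ℝ := fun j y => c j * |hstep L D (y - (j:ℕ)/D)| with hT
  have hSnull : (volume : Measure ℝ) (Set.range (fun k : Fin (D+1) => ((k:ℕ):ℝ)/D)) = 0 :=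
    (Set.finite_range _).measure_zero _
  have hptwise : ∀ y ∉ Set.range (fun k : Fin (D+1) => ((k:ℕ):ℝ)/D),
      |G y| = ∑ j : Fin D, T j y := by
    intro y hy
    have hyne : ∀ m : ℕ, m < D + 1 → (D:ℝ)*y ≠ m := by
      intro m hm hDy
      apply hy
      refine ⟨⟨m, hm⟩, ?_⟩
      show ((m:ℕ):ℝ)/D = y
      rw [div_eq_iff hD'.ne']
      push_cast
      linarith [mul_comm (D:ℝ) y]
    have huniq : ∀ j k : Fin D, hstep L D (y - (j:ℕ)/D) ≠ 0 →
        hstep L D (y - (k:ℕ)/D) ≠ 0 → j = k := by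
      intro j k hj hk
      obtain ⟨hj1, hj2⟩ := hstep_mem hD0 hj
      obtain ⟨hk1, hk2⟩ := hstep_mem hD0 hk
      by_contra hne
      rcases lt_trichotomy (j:ℕ) (k:ℕ) with hlt | heq | hgt
      · have hc1 : ((j:ℕ):ℝ) + 1 ≤ (k:ℕ) := by exact_mod_cast hlt
        have : (D:ℝ)*y = (k:ℕ) := le_antisymm (by linarith) hk1
        exact hyne (k:ℕ) (by omega) this
      · exact hne (Fin.ext heq)
      · have hc1 : ((k:ℕ):ℝ) + 1 ≤ (j:ℕ) := by exact_mod_cast hgt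
        have : (D:ℝ)*y = (j:ℕ) := le_antisymm (by linarith) hj1
        exact hyne (j:ℕ) (by omega) this
    by_cases hex : ∃ j0 : Fin D, hstep L D (y - (j0:ℕ)/D) ≠ 0
    · obtain ⟨j0, hj0⟩ := hex
      have hzero : ∀ j : Fin D, j ≠ j0 → hstep L D (y - (j:ℕ)/D) = 0 := by
        intro j hj
        by_contra h
        exact hj (huniq j j0 h hj0)
      have hGy : G y = ε j0 * hstep L D (y - (j0:ℕ)/D) := by
        rw [hG]
        exact Finset.sum_eq_single j0 (fun j _ hj => by rw [hzero j hj, mul_zero])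
          (fun h => absurd (Finset.mem_univ j0) h)
      have hTy : ∑ j : Fin D, T j y = T j0 y :=
        Finset.sum_eq_single j0 (fun j _ hj => by rw [hT]; simp [hzero j hj])
          (fun h => absurd (Finset.mem_univ j0) h)
      rw [hGy, hTy, abs_mul, habsε, hT]
    · push_neg at hex
      have hGy : G y = 0 := by
        rw [hG]; exact Finset.sum_eq_zero fun j _ => by rw [hex j, mul_zero]
      have hTy : ∑ j : Fin D, T j y = 0 :=
        Finset.sum_eq_zero fun j _ => by rw [hT]; simp [hex j]
      rw [hGy, hTy, abs_zero]
  have hae : (fun y => |G y|) =ᵐ[(volume : Measure ℝ)] fun y => ∑ j : Fin D, T j y := by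
    filter_upwards [MeasureTheory.compl_mem_ae_iff.mpr hSnull] with y hy
    exact hptwise y hy
  rw [MeasureTheory.integral_congr_ae hae]
  have hTrw : ∀ j : Fin D, T j = fun y => c j *
      (L/D * Set.indicator (Set.Icc (((j:ℕ):ℝ)/D) ((((j:ℕ):ℝ)+1)/D)) (fun _ => 1) y) := by
    intro j
    funext y
    simp only [hT]
    rw [abs_hstep hL hD0]
  have hTint : ∀ j : Fin D, MeasureTheory.Integrable (T j) := by
    intro j
    rw [hTrw j]
    apply MeasureTheory.Integrable.const_mul
    apply MeasureTheory.Integrable.const_mul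
    rw [MeasureTheory.integrable_indicator_iff measurableSet_Icc]
    exact MeasureTheory.integrableOn_const measure_Icc_lt_top.ne
  rw [MeasureTheory.integral_finset_sum _ (fun j _ => hTint j)]
  have hTval : ∀ j : Fin D, (∫ y, T j y) = c j * (L / D^2) := by
    intro j
    simp only [hTrw j]
    rw [MeasureTheory.integral_const_mul, MeasureTheory.integral_const_mul]
    rw [MeasureTheory.integral_indicator_const (1:ℝ) measurableSet_Icc]
    rw [Real.volume_real_Icc]
    have hlen : (((j:ℕ):ℝ)+1)/D - ((j:ℕ):ℝ)/D = 1/D := by field_simp; ring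
    rw [hlen, max_eq_left (by positivity)]
    rw [smul_eq_mul, mul_one]
    ring
  simp_rw [hTval]
  rw [← Finset.sum_mul]
  have hham : ∑ j : Fin D, c j = (hammingDist δ1 δ2 : ℝ) := by
    simp only [hc]
    rw [Finset.sum_boole]
    norm_num [hammingDist]
  rw [hham, mul_comm]

end
end
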